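/- (de Casteljau type Algorithm 1, explicit form) Let q > 0, let a < b be real numbers with d(a,b;q^i) ≠ 0 for i = 0,…,n−1, and let b_0,…,b_n be points in ℝ^d. Define b̃^0_k(x) = b_k for k = 0,…,n, and recursively b̃^{r+1}_k(x) = q^k·(d(x,b;q^{n−r−k−1})/d(a,b;q^{n−r−1}))·b̃^r_k(x) + (d(a,x;q^k)/d(a,b;q^{n−r−1}))·b̃^r_{k+1}(x) for r = 0,…,n−1 and k = 0,…,n−r−1. Then for every r with 0 ≤ r ≤ n and every k with 0 ≤ k ≤ n−r, b̃^r_k(x) = Σ_{j=0}^{r} q^{k(r−j)} · b_{k+j} · [r choose j]_q · (∏_{i=0}^{j−1} d(a,x;q^{i+k}) · ∏_{i=0}^{r−j−1} d(x,b;q^{i+n−r−k})) / ∏_{i=0}^{r−1} d(a,b;q^{i+n−r}). -/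

import Mathlib

/-- `d(x,y;c) = ((c+1)/2)·sin(y−x) + ((c−1)/2)·sin(y+x)`. -/
noncomputable def dq (x y c : ℝ) : ℝ :=
  (c + 1) / 2 * Real.sin (y - x) + (c - 1) / 2 * Real.sin (y + x)

/-- The q-integer `[k]_q = 1 + q + ⋯ + q^{k−1}`. -/
noncomputable def qInt (q : ℝ) (k : ℕ) : ℝ := ∑ i ∈ Finset.range k, q ^ i

/-- The q-factorial `[k]_q!`. -/
noncomputable def qFact (q : ℝ) : ℕ → ℝ
  | 0 => 1
  | k + 1 => qInt q (k + 1) * qFact q k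

/-- The q-binomial coefficient `[n choose k]_q`. -/
noncomputable def qBinom (q : ℝ) (n k : ℕ) : ℝ :=
  qFact q n / (qFact q k * qFact q (n - k))

/-- Quantum trigonometric Bernstein basis function `B^n_k(x;q)` on `[a,b]`. -/
noncomputable def qBern (q a b : ℝ) (n k : ℕ) (x : ℝ) : ℝ :=
  qBinom q n k *
    ((∏ i ∈ Finset.range k, dq a x (q ^ i)) * ∏ i ∈ Finset.range (n - k), dq x b (q ^ i)) /
    ∏ i ∈ Finset.range n, dq a b (q ^ i)

/-- A matrix is totally positive if all its minors are nonnegative. -/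
def IsTotallyPositive {p r : ℕ} (M : Matrix (Fin p) (Fin r) ℝ) : Prop :=
  ∀ (k : ℕ) (f : Fin k → Fin p) (g : Fin k → Fin r),
    StrictMono f → StrictMono g → 0 ≤ (M.submatrix f g).det

/-- A system of functions is totally positive on `I` if all its collocation matrices at
increasing points of `I` are totally positive. -/
def IsTotallyPositiveSystem (I : Set ℝ) {n : ℕ} (φ : Fin n → ℝ → ℝ) : Prop :=
  ∀ (m : ℕ) (x : Fin (m + 1) → ℝ), StrictMono x → (∀ j, x j ∈ I) →
    IsTotallyPositive (Matrix.of fun i j => φ i (x j))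

/-- Number of sign changes between consecutive entries of a list. -/
noncomputable def signChanges : List ℝ → ℕ
  | [] => 0
  | [_] => 0
  | a :: b :: t => (if a * b < 0 then 1 else 0) + signChanges (b :: t)

/-- `S⁻(v)`: the number of strict sign changes of a finite real sequence, i.e. the number
of sign changes after deleting all zero entries. -/
noncomputable def strictSignChanges (v : List ℝ) : ℕ :=
  signChanges (v.filter fun x => x ≠ 0)

/-- Rational quantum trigonometric Bernstein basis function `R^n_k(x;q)` with weights `w`. -/
noncomputable def rqBern (q a b : ℝ) (n : ℕ) (w : Fin (n + 1) → ℝ) (k : Fin (n + 1)) (x : ℝ) : ℝ :=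
  w k * qBern q a b n k x / ∑ i : Fin (n + 1), w i * qBern q a b n i x

lemma qInt_pos {q : ℝ} (hq : 0 < q) {k : ℕ} (hk : 0 < k) : 0 < qInt q k := by
  unfold qInt
  exact Finset.sum_pos (fun i _ => pow_pos hq i) (Finset.nonempty_range_iff.mpr (by omega))

lemma qFact_pos {q : ℝ} (hq : 0 < q) : ∀ k, 0 < qFact q k
  | 0 => one_pos
  | (k+1) => by rw [qFact]; exact mul_pos (qInt_pos hq k.succ_pos) (qFact_pos hq k)

lemma qBinom_zero {q : ℝ} (hq : 0 < q) (r : ℕ) : qBinom q r 0 = 1 := by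
  unfold qBinom
  rw [show qFact q 0 = 1 from rfl, Nat.sub_zero, one_mul, div_self (qFact_pos hq r).ne']

lemma qBinom_self {q : ℝ} (hq : 0 < q) (r : ℕ) : qBinom q r r = 1 := by
  unfold qBinom
  rw [Nat.sub_self, show qFact q 0 = 1 from rfl, mul_one, div_self (qFact_pos hq r).ne']

lemma qInt_add (q : ℝ) (j m : ℕ) : qInt q (j + m) = qInt q j + q ^ j * qInt q m := by
  unfold qInt
  rw [Finset.sum_range_add, Finset.mul_sum]
  simp [pow_add]

lemma qPascal {q : ℝ} (hq : 0 < q) (j t : ℕ) :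
    qBinom q (j+t+2) (j+1) = qBinom q (j+t+1) (j+1) + q^(t+1) * qBinom q (j+t+1) j := by
  unfold qBinom
  rw [show j+t+2 - (j+1) = t+1 from by omega, show j+t+1 - (j+1) = t from by omega,
    show j+t+1 - j = t+1 from by omega,
    show qFact q (j+t+2) = qInt q (j+t+2) * qFact q (j+t+1) from rfl,
    show qFact q (t+1) = qInt q (t+1) * qFact q t from rfl,
    show qFact q (j+1) = qInt q (j+1) * qFact q j from rfl,
    show j+t+2 = (t+1) + (j+1) from by omega, qInt_add]
  have h1 := (qInt_pos hq j.succ_pos).ne'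
  have h2 := (qInt_pos hq t.succ_pos).ne'
  have h3 := (qFact_pos hq j).ne'
  have h4 := (qFact_pos hq t).ne'
  field_simp

lemma prod_shift (f : ℕ → ℝ) (m s : ℕ) :
    ∏ i ∈ Finset.range (s+1), f (i+m) = (∏ i ∈ Finset.range s, f (i+1+m)) * f m := by
  simpa using Finset.prod_range_succ' (fun i => f (i + m)) s

lemma sum_step {M : Type*} [AddCommMonoid M] (r : ℕ) (f g h : ℕ → M)
    (h0 : h 0 = f 0) (htop : h (r+1) = g r)
    (hmid : ∀ j ∈ Finset.range r, h (j+1) = f (j+1) + g j) :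
    (∑ j ∈ Finset.range (r+1), f j) + (∑ j ∈ Finset.range (r+1), g j)
      = ∑ j ∈ Finset.range (r+1+1), h j := by
  rw [Finset.sum_range_succ h (r+1), Finset.sum_range_succ' h r, Finset.sum_range_succ' f r,
    Finset.sum_range_succ g r, h0, htop, Finset.sum_congr rfl hmid, Finset.sum_add_distrib]
  abel


/-- de Casteljau type Algorithm 1: explicit form of the intermediate points. -/
theorem deCasteljau_algorithm_one (n d : ℕ) (q a b : ℝ) (hq : 0 < q) (hab : a < b)
    (hd : ∀ i < n, dq a b (q ^ i) ≠ 0)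
    (bp : ℕ → Fin d → ℝ) (x : ℝ) (bt : ℕ → ℕ → Fin d → ℝ)
    (h0 : ∀ k ≤ n, bt 0 k = bp k)
    (hrec : ∀ r k, r < n → k ≤ n - r - 1 →
      bt (r + 1) k =
        (q ^ k * (dq x b (q ^ (n - r - k - 1)) / dq a b (q ^ (n - r - 1)))) • bt r k +
        (dq a x (q ^ k) / dq a b (q ^ (n - r - 1))) • bt r (k + 1)) :
    ∀ r k, r ≤ n → k ≤ n - r →
      bt r k = ∑ j ∈ Finset.range (r + 1),
        (q ^ (k * (r - j)) * qBinom q r j *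
          ((∏ i ∈ Finset.range j, dq a x (q ^ (i + k))) *
            ∏ i ∈ Finset.range (r - j), dq x b (q ^ (i + n - r - k))) /
          ∏ i ∈ Finset.range r, dq a b (q ^ (i + n - r))) • bp (k + j) := by
  intro r
  induction r with
  | zero =>
    intro k _ _
    simp [h0 k (by omega), qBinom, show qFact q 0 = 1 from rfl]
  | succ r IH =>
    intro k hr hk
    have hrn : r < n := by omega
    have IH1 := IH k (by omega) (by omega)
    have IH2 := IH (k+1) (by omega) (by omega)
    rw [hrec r k hrn (by omega), IH1, IH2, Finset.smul_sum, Finset.smul_sum]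
    obtain ⟨m, rfl⟩ : ∃ m, n = r + 1 + k + m := ⟨n - (r+1+k), by omega⟩
    simp only [smul_smul,
      show r+1+k+m - r - k - 1 = m from by omega,
      show r+1+k+m - r - 1 = k+m from by omega,
      show ∀ i : ℕ, i + (r+1+k+m) - r - k = i+1+m from fun i => by omega,
      show ∀ i : ℕ, i + (r+1+k+m) - r - (k+1) = i+m from fun i => by omega,
      show ∀ i : ℕ, i + (r+1+k+m) - r = i+1+(k+m) from fun i => by omega,
      show ∀ i : ℕ, i + (r+1+k+m) - (r+1) - k = i+m from fun i => by omega,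
      show ∀ i : ℕ, i + (r+1+k+m) - (r+1) = i+(k+m) from fun i => by omega,
      show ∀ i : ℕ, i + (k+m) - k = i+m from fun i => by omega,
      show ∀ i : ℕ, i+1 + (k+m) - k = i+1+m from fun i => by omega,
      show ∀ i : ℕ, i+1 + (k+m) - (k+1) = i+m from fun i => by omega,
      show ∀ i : ℕ, i + (k+1) = i+1+k from fun i => by omega]
    have hd0 : dq a b (q ^ (k+m)) ≠ 0 := hd (k+m) (by omega)
    have hden : (∏ i ∈ Finset.range r, dq a b (q ^ (i+1+(k+m)))) ≠ 0 :=
      Finset.prod_ne_zero_iff.mpr fun i hi => hd (i+1+(k+m)) (by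
        have := Finset.mem_range.mp hi; omega)
    refine sum_step r _ _ _ ?_ ?_ ?_
    · -- j = 0
      congr 1
      rw [show r + 1 - 0 = r + 1 from by omega, Nat.sub_zero,
        qBinom_zero hq, qBinom_zero hq,
        prod_shift (fun s => dq x b (q ^ s)) m r,
        prod_shift (fun s => dq a b (q ^ s)) (k+m) r]
      simp only [Finset.range_zero, Finset.prod_empty]
      field_simp
      ring
    · -- j = r + 1
      rw [show k + (r+1) = k + 1 + r from by omega]
      congr 1
      simp only [Nat.sub_self, Finset.range_zero, Finset.prod_empty]
      rw [qBinom_self hq, qBinom_self hq,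
        prod_shift (fun s => dq a x (q ^ s)) k r,
        prod_shift (fun s => dq a b (q ^ s)) (k+m) r]
      simp only [Finset.range_zero, Finset.prod_empty, Nat.mul_zero, pow_zero]
      field_simp
    · -- middle terms
      intro j hj
      rw [show k + 1 + j = k + (j+1) from by omega, ← add_smul]
      congr 1
      obtain ⟨t, rfl⟩ : ∃ t, r = j + 1 + t := ⟨r - (j+1), by
        have := Finset.mem_range.mp hj; omega⟩
      have hp : qBinom q (j+1+t+1) (j+1)
          = qBinom q (j+1+t) (j+1) + q^(t+1) * qBinom q (j+1+t) j := by
        have h := qPascal hq j t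
        rw [show j+t+2 = j+1+t+1 from by omega, show j+t+1 = j+1+t from by omega] at h
        exact h
      rw [show j+1+t - (j+1) = t from by omega, show j+1+t - j = t+1 from by omega,
        show j+1+t+1 - (j+1) = t+1 from by omega, hp,
        prod_shift (fun s => dq x b (q ^ s)) m t,
        prod_shift (fun s => dq a x (q ^ s)) k j,
        prod_shift (fun s => dq a b (q ^ s)) (k+m) (j+1+t)]
      field_simp
      ring
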